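/- Let X, Y, Z, W, U be mutually independent exponentially distributed random variables with means m_x, m_y, m_z, m_w, m_u > 0, and let P₁, P₂ > 0 be constants with P₁·m_x ≠ P₂·m_y. Then E[ (P₁·Z + P₂·W)·U / (P₁·X + P₂·Y) ] = m_u·(P₁·m_z + P₂·m_w) · ln( (P₁·m_x)/(P₂·m_y) ) / (P₁·m_x − P₂·m_y). -/

import Mathlib

/-!
Write `D = P₁X + P₂Y`. By independence the expectation factors as
`E[P₁Z + P₂W] · E[U] · E[D⁻¹]`, and only `E[D⁻¹]` needs work. Writing `D⁻¹ = ∫₀^∞ e^{-tD} dt` and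
applying Tonelli, independence turns `E[e^{-tD}]` into a product of two Laplace transforms of
exponential laws, `(1 + P₁m_x t)⁻¹ (1 + P₂m_y t)⁻¹`. This rational function has antiderivative
`(log(1 + αt) - log(1 + βt)) / (α - β)`, whose limit at infinity gives the logarithm.
-/

open MeasureTheory ProbabilityTheory Real Set Filter Topology
open scoped ENNReal

lemma lintegral_rpow_mul_exp_neg_mul_Ioi {a r : ℝ} (ha : 0 < a) (hr : 0 < r) :
    ∫⁻ t in Ioi 0, ENNReal.ofReal (t ^ (a - 1) * exp (-(r * t)))
      = ENNReal.ofReal ((1 / r) ^ a * Gamma a) := by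
  have hint := integral_rpow_mul_exp_neg_mul_Ioi ha hr
  rw [← hint, ofReal_integral_eq_lintegral_ofReal
    (.of_integral_ne_zero (by rw [hint]; positivity))]
  filter_upwards [ae_restrict_mem measurableSet_Ioi] with t (ht : 0 < t)
  positivity

lemma lintegral_exp_neg_mul_Ioi {c : ℝ} (hc : 0 < c) :
    ∫⁻ t in Ioi 0, ENNReal.ofReal (exp (-(c * t))) = ENNReal.ofReal c⁻¹ := by
  simpa using lintegral_rpow_mul_exp_neg_mul_Ioi one_pos hc

lemma lintegral_mul_exp_neg_mul_Ioi {c : ℝ} (hc : 0 < c) :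
    ∫⁻ t in Ioi 0, ENNReal.ofReal (t * exp (-(c * t))) = ENNReal.ofReal (c ^ 2)⁻¹ := by
  have h := lintegral_rpow_mul_exp_neg_mul_Ioi two_pos hc
  rw [show (2 : ℝ) - 1 = 1 by norm_num] at h
  simpa using h

section RationalIntegral

variable {α β : ℝ}

lemma tendsto_log_one_add_mul_sub_log_one_add_mul (hα : 0 < α) (hβ : 0 < β) :
    Tendsto (fun t => log (1 + α * t) - log (1 + β * t)) atTop (𝓝 (log (α / β))) := by
  have hlim : Tendsto (fun t : ℝ => log (t⁻¹ + α) - log (t⁻¹ + β)) atTop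
      (𝓝 (log (0 + α) - log (0 + β))) :=
    ((continuousAt_log (by positivity)).tendsto.comp (tendsto_inv_atTop_zero.add_const α)).sub
      ((continuousAt_log (by positivity)).tendsto.comp (tendsto_inv_atTop_zero.add_const β))
  rw [zero_add, zero_add, ← log_div hα.ne' hβ.ne'] at hlim
  refine hlim.congr' ?_
  filter_upwards [eventually_gt_atTop 0] with t ht
  rw [show 1 + α * t = t * (t⁻¹ + α) by field_simp, show 1 + β * t = t * (t⁻¹ + β) by field_simp,
    log_mul ht.ne' (by positivity), log_mul ht.ne' (by positivity)]
  ring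

lemma integral_Ioi_inv_one_add_mul_mul_one_add_mul (hα : 0 < α) (hβ : 0 < β) (hne : α ≠ β) :
    ∫ t in Ioi 0, ((1 + α * t) * (1 + β * t))⁻¹ = log (α / β) / (α - β) := by
  have hderiv : ∀ t ∈ Ici (0 : ℝ),
      HasDerivAt (fun t => (log (1 + α * t) - log (1 + β * t)) / (α - β))
        ((1 + α * t) * (1 + β * t))⁻¹ t := by
    intro t (ht : 0 ≤ t)
    have hαt : 0 < 1 + α * t := by positivity
    have hβt : 0 < 1 + β * t := by positivity
    have h := ((((hasDerivAt_id t).const_mul α).const_add 1).log hαt.ne').sub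
      ((((hasDerivAt_id t).const_mul β).const_add 1).log hβt.ne') |>.div_const (α - β)
    refine h.congr_deriv ?_
    simp only [id, mul_one]
    field_simp [sub_ne_zero.2 hne]
    ring
  have hnonneg : ∀ t ∈ Ioi (0 : ℝ), 0 ≤ ((1 + α * t) * (1 + β * t))⁻¹ := by
    intro t (ht : 0 < t)
    positivity
  simpa using integral_Ioi_of_hasDerivAt_of_nonneg' hderiv hnonneg
    ((tendsto_log_one_add_mul_sub_log_one_add_mul hα hβ).div_const (α - β))

end RationalIntegral

namespace ProbabilityTheory

section ExpMeasure

lemma expMeasure_Iic_zero (r : ℝ) : expMeasure r (Iic 0) = 0 := by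
  rw [expMeasure, gammaMeasure, withDensity_apply _ measurableSet_Iic,
    setLIntegral_congr Iio_ae_eq_Iic.symm]
  exact lintegral_exponentialPDF_of_nonpos le_rfl

lemma ae_pos_expMeasure (r : ℝ) : ∀ᵐ x ∂expMeasure r, 0 < x := by
  rw [ae_iff]
  simp only [not_lt]
  exact expMeasure_Iic_zero r

lemma lintegral_expMeasure (r : ℝ) {g : ℝ → ℝ≥0∞} (hg : Measurable g) :
    ∫⁻ x, g x ∂expMeasure r = ∫⁻ x in Ioi 0, ENNReal.ofReal (r * exp (-(r * x))) * g x := by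
  rw [← Measure.restrict_eq_self_of_ae_mem (s := Ioi 0) (ae_pos_expMeasure r), expMeasure,
    gammaMeasure, restrict_withDensity measurableSet_Ioi,
    lintegral_withDensity_eq_lintegral_mul (f := gammaPDF 1 r) _
      (measurable_gammaPDFReal 1 r).ennreal_ofReal hg]
  refine setLIntegral_congr_fun measurableSet_Ioi fun x (hx : 0 < x) => ?_
  rw [Pi.mul_apply, ← exponentialPDF_of_nonneg hx.le]
  rfl

variable {r : ℝ}

lemma lintegral_exp_neg_mul_expMeasure (hr : 0 < r) {s : ℝ} (hs : 0 ≤ s) :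
    ∫⁻ x, ENNReal.ofReal (exp (-(s * x))) ∂expMeasure r = ENNReal.ofReal (r / (r + s)) := by
  calc ∫⁻ x, ENNReal.ofReal (exp (-(s * x))) ∂expMeasure r
      = ∫⁻ x in Ioi 0, ENNReal.ofReal r * ENNReal.ofReal (exp (-((r + s) * x))) := by
        rw [lintegral_expMeasure r (by fun_prop)]
        congr with x
        rw [← ENNReal.ofReal_mul hr.le, ← ENNReal.ofReal_mul (by positivity), mul_assoc,
          ← exp_add]
        ring_nf
    _ = ENNReal.ofReal (r / (r + s)) := by
        rw [lintegral_const_mul _ (by fun_prop), lintegral_exp_neg_mul_Ioi (by positivity),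
          ← ENNReal.ofReal_mul hr.le, div_eq_mul_inv]

lemma lintegral_ofReal_expMeasure (hr : 0 < r) :
    ∫⁻ x, ENNReal.ofReal x ∂expMeasure r = ENNReal.ofReal r⁻¹ := by
  calc ∫⁻ x, ENNReal.ofReal x ∂expMeasure r
      = ∫⁻ x in Ioi 0, ENNReal.ofReal r * ENNReal.ofReal (x * exp (-(r * x))) := by
        rw [lintegral_expMeasure r (by fun_prop)]
        refine setLIntegral_congr_fun measurableSet_Ioi fun x (hx : 0 < x) => ?_
        rw [← ENNReal.ofReal_mul hr.le, ← ENNReal.ofReal_mul (by positivity)]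
        ring_nf
    _ = ENNReal.ofReal r⁻¹ := by
        rw [lintegral_const_mul _ (by fun_prop), lintegral_mul_exp_neg_mul_Ioi hr,
          ← ENNReal.ofReal_mul hr.le]
        field_simp

lemma integral_id_expMeasure (hr : 0 < r) : ∫ x, x ∂expMeasure r = r⁻¹ := by
  rw [integral_eq_lintegral_of_nonneg_ae ((ae_pos_expMeasure r).mono fun x hx => hx.le)
      aestronglyMeasurable_id, lintegral_ofReal_expMeasure hr,
    ENNReal.toReal_ofReal (by positivity)]

variable {Ω : Type*} {mΩ : MeasurableSpace Ω} {μ : Measure Ω} {X Y : Ω → ℝ}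

lemma HasLaw.ae_pos_of_expMeasure (hX : HasLaw X (expMeasure r) μ) : ∀ᵐ ω ∂μ, 0 < X ω :=
  (hX.ae_iff (p := fun x => 0 < x) (by fun_prop)).2 (ae_pos_expMeasure r)

lemma HasLaw.integral_of_expMeasure (hX : HasLaw X (expMeasure r) μ) (hr : 0 < r) :
    μ[X] = r⁻¹ := by
  rw [hX.integral_eq, integral_id_expMeasure hr]

lemma HasLaw.lintegral_exp_neg_mul_of_expMeasure {m s : ℝ}
    (hX : HasLaw X (expMeasure (1 / m)) μ) (hm : 0 < m) (hs : 0 ≤ s) :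
    ∫⁻ ω, ENNReal.ofReal (exp (-(s * X ω))) ∂μ = ENNReal.ofReal (1 + m * s)⁻¹ := by
  rw [hX.lintegral_comp (f := fun x => ENNReal.ofReal (exp (-(s * x)))) (by fun_prop),
    lintegral_exp_neg_mul_expMeasure (by positivity) hs]
  congr 1
  field_simp

variable {mx my a b : ℝ}

lemma lintegral_inv_add_of_indepFun (hmx : 0 < mx) (hmy : 0 < my) (ha : 0 < a) (hb : 0 < b)
    (hX : HasLaw X (expMeasure (1 / mx)) μ) (hY : HasLaw Y (expMeasure (1 / my)) μ)
    (hXY : IndepFun X Y μ) :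
    ∫⁻ ω, ENNReal.ofReal (a * X ω + b * Y ω)⁻¹ ∂μ
      = ∫⁻ t in Ioi 0, ENNReal.ofReal ((1 + a * mx * t) * (1 + b * my * t))⁻¹ := by
  have : IsProbabilityMeasure μ :=
    hX.isProbabilityMeasure_iff.2 (isProbabilityMeasure_expMeasure (by positivity))
  have hXm := hX.aemeasurable
  have hYm := hY.aemeasurable
  calc ∫⁻ ω, ENNReal.ofReal (a * X ω + b * Y ω)⁻¹ ∂μ
      = ∫⁻ ω, (∫⁻ t in Ioi 0, ENNReal.ofReal (exp (-(a * t * X ω)))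
          * ENNReal.ofReal (exp (-(b * t * Y ω)))) ∂μ := by
        refine lintegral_congr_ae ?_
        filter_upwards [hX.ae_pos_of_expMeasure, hY.ae_pos_of_expMeasure] with ω hXω hYω
        rw [← lintegral_exp_neg_mul_Ioi (by positivity)]
        congr with t
        rw [← ENNReal.ofReal_mul (exp_pos _).le, ← exp_add]
        ring_nf
    _ = ∫⁻ t in Ioi 0, ∫⁻ ω, ENNReal.ofReal (exp (-(a * t * X ω)))
          * ENNReal.ofReal (exp (-(b * t * Y ω))) ∂μ := by
        have := hXm.comp_fst (ν := volume.restrict (Ioi (0 : ℝ)))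
        have := hYm.comp_fst (ν := volume.restrict (Ioi (0 : ℝ)))
        exact lintegral_lintegral_swap (by fun_prop)
    _ = ∫⁻ t in Ioi 0, ENNReal.ofReal ((1 + a * mx * t) * (1 + b * my * t))⁻¹ := by
        refine setLIntegral_congr_fun measurableSet_Ioi fun t (ht : 0 < t) => ?_
        rw [lintegral_mul_eq_lintegral_mul_lintegral_of_indepFun''
            (f := fun ω => ENNReal.ofReal (exp (-(a * t * X ω))))
            (g := fun ω => ENNReal.ofReal (exp (-(b * t * Y ω)))) (by fun_prop) (by fun_prop)
            (hXY.comp (φ := fun x => ENNReal.ofReal (exp (-(a * t * x))))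
              (ψ := fun y => ENNReal.ofReal (exp (-(b * t * y)))) (by fun_prop) (by fun_prop)),
          hX.lintegral_exp_neg_mul_of_expMeasure hmx (by positivity),
          hY.lintegral_exp_neg_mul_of_expMeasure hmy (by positivity),
          ← ENNReal.ofReal_mul (by positivity), mul_inv]
        ring_nf

lemma integral_inv_add_of_indepFun (hmx : 0 < mx) (hmy : 0 < my) (ha : 0 < a) (hb : 0 < b)
    (hne : a * mx ≠ b * my) (hX : HasLaw X (expMeasure (1 / mx)) μ)
    (hY : HasLaw Y (expMeasure (1 / my)) μ) (hXY : IndepFun X Y μ) :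
    ∫ ω, (a * X ω + b * Y ω)⁻¹ ∂μ = log (a * mx / (b * my)) / (a * mx - b * my) := by
  have hXm := hX.aemeasurable
  have hYm := hY.aemeasurable
  calc ∫ ω, (a * X ω + b * Y ω)⁻¹ ∂μ
      = (∫⁻ ω, ENNReal.ofReal (a * X ω + b * Y ω)⁻¹ ∂μ).toReal := by
        refine integral_eq_lintegral_of_nonneg_ae ?_ (by fun_prop)
        filter_upwards [hX.ae_pos_of_expMeasure, hY.ae_pos_of_expMeasure] with ω hXω hYω
        positivity
    _ = ∫ t in Ioi 0, ((1 + a * mx * t) * (1 + b * my * t))⁻¹ := by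
        rw [lintegral_inv_add_of_indepFun hmx hmy ha hb hX hY hXY,
          integral_eq_lintegral_of_nonneg_ae _ (by fun_prop)]
        filter_upwards [ae_restrict_mem measurableSet_Ioi] with t (ht : 0 < t)
        positivity
    _ = log (a * mx / (b * my)) / (a * mx - b * my) :=
        integral_Ioi_inv_one_add_mul_mul_one_add_mul (by positivity) (by positivity) hne

end ExpMeasure

lemma iIndepFun.indepFun_prodMk₃_prodMk {Ω ι β : Type*} {mΩ : MeasurableSpace Ω}
    {μ : Measure Ω} [DecidableEq ι] {mβ : MeasurableSpace β} {f : ι → Ω → β}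
    (h : iIndepFun f μ) (hf : ∀ i, Measurable (f i)) {i j k l m : ι}
    (hdisj : Disjoint ({i, j, k} : Finset ι) {l, m}) :
    IndepFun (fun ω => (f i ω, f j ω, f k ω)) (fun ω => (f l ω, f m ω)) μ :=
  (h.indepFun_finset {i, j, k} {l, m} hdisj hf).comp
    (φ := fun v => (v ⟨i, by simp⟩, v ⟨j, by simp⟩, v ⟨k, by simp⟩))
    (ψ := fun v => (v ⟨l, by simp⟩, v ⟨m, by simp⟩))
    ((measurable_pi_apply _).prodMk ((measurable_pi_apply _).prodMk (measurable_pi_apply _)))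
    ((measurable_pi_apply _).prodMk (measurable_pi_apply _))

end ProbabilityTheory

theorem expectation_jamming_ratio_general
    {Ω : Type*} [MeasurableSpace Ω] (μ : Measure Ω)
    (X Y Z W U : Ω → ℝ) (mx my mz mw mu P1 P2 : ℝ)
    (hmx : 0 < mx) (hmy : 0 < my) (hmz : 0 < mz) (hmw : 0 < mw) (hmu : 0 < mu)
    (hP1 : 0 < P1) (hP2 : 0 < P2) (hne : P1 * mx ≠ P2 * my)
    (hXm : Measurable X) (hYm : Measurable Y) (hZm : Measurable Z)
    (hWm : Measurable W) (hUm : Measurable U)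
    (hX : Measure.map X μ = expMeasure (1 / mx))
    (hY : Measure.map Y μ = expMeasure (1 / my))
    (hZ : Measure.map Z μ = expMeasure (1 / mz))
    (hW : Measure.map W μ = expMeasure (1 / mw))
    (hU : Measure.map U μ = expMeasure (1 / mu))
    (hindep : iIndepFun ![X, Y, Z, W, U] μ) :
    ∫ ω, (P1 * Z ω + P2 * W ω) * U ω / (P1 * X ω + P2 * Y ω) ∂μ
      = mu * (P1 * mz + P2 * mw) * Real.log (P1 * mx / (P2 * my)) / (P1 * mx - P2 * my) := by
  have hlaw {V : Ω → ℝ} {m : ℝ} (hV : Measurable V) (hmap : μ.map V = expMeasure (1 / m)) :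
      HasLaw V (expMeasure (1 / m)) μ := ⟨hV.aemeasurable, hmap⟩
  have hmean {V : Ω → ℝ} {m : ℝ} (hm : 0 < m) (hV : Measurable V)
      (hmap : μ.map V = expMeasure (1 / m)) : ∫ ω, V ω ∂μ = m := by
    rw [(hlaw hV hmap).integral_of_expMeasure (by positivity), one_div, inv_inv]
  have hmeas : ∀ i, Measurable (![X, Y, Z, W, U] i) := fun i => by fin_cases i <;> assumption
  have hnum_den : IndepFun (fun ω => (P1 * Z ω + P2 * W ω) * U ω)
      (fun ω => (P1 * X ω + P2 * Y ω)⁻¹) μ :=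
    (hindep.indepFun_prodMk₃_prodMk hmeas (i := 2) (j := 3) (k := 4) (l := 0) (m := 1)
      (by decide)).comp (φ := fun v : ℝ × ℝ × ℝ => (P1 * v.1 + P2 * v.2.1) * v.2.2)
      (ψ := fun v : ℝ × ℝ => (P1 * v.1 + P2 * v.2)⁻¹) (by fun_prop) (by fun_prop)
  have hZW_U : IndepFun (fun ω => P1 * Z ω + P2 * W ω) U μ :=
    (hindep.indepFun_prodMk hmeas 2 3 4 (by decide) (by decide)).comp
      (φ := fun v : ℝ × ℝ => P1 * v.1 + P2 * v.2) (by fun_prop) measurable_id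
  have hXY : IndepFun X Y μ := hindep.indepFun (show (0 : Fin 5) ≠ 1 by decide)
  have hEZ := hmean hmz hZm hZ
  have hEW := hmean hmw hWm hW
  conv_lhs => simp only [div_eq_mul_inv]
  rw [hnum_den.integral_fun_mul_eq_mul_integral (by fun_prop) (by fun_prop),
    hZW_U.integral_fun_mul_eq_mul_integral (by fun_prop) (by fun_prop),
    integral_add ((Integrable.of_integral_ne_zero (by rw [hEZ]; positivity)).const_mul P1)
      ((Integrable.of_integral_ne_zero (by rw [hEW]; positivity)).const_mul P2),
    integral_const_mul, integral_const_mul, hEZ, hEW, hmean hmu hUm hU,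
    integral_inv_add_of_indepFun hmx hmy hP1 hP2 hne (hlaw hXm hX) (hlaw hYm hY) hXY]
  ring

/-- The expectation appearing in the term `𝒦₂` of the friendly-jamming lower bound:
for mutually independent exponential `X, Y, Z, W, U` with means `m_x, m_y, m_z, m_w, m_u`
and constants `P₁, P₂ > 0` with `P₁·m_x ≠ P₂·m_y`,
`E[(P₁·Z + P₂·W)·U/(P₁·X + P₂·Y)]
  = m_u·(P₁·m_z + P₂·m_w)·ln((P₁·m_x)/(P₂·m_y))/(P₁·m_x - P₂·m_y)`. -/
theorem expectation_jamming_ratio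
    {Ω : Type*} [MeasurableSpace Ω] (μ : Measure Ω) [IsProbabilityMeasure μ]
    (X Y Z W U : Ω → ℝ) (mx my mz mw mu P1 P2 : ℝ)
    (hmx : 0 < mx) (hmy : 0 < my) (hmz : 0 < mz) (hmw : 0 < mw) (hmu : 0 < mu)
    (hP1 : 0 < P1) (hP2 : 0 < P2) (hne : P1 * mx ≠ P2 * my)
    (hXm : Measurable X) (hYm : Measurable Y) (hZm : Measurable Z)
    (hWm : Measurable W) (hUm : Measurable U)
    (hX : Measure.map X μ = expMeasure (1 / mx))
    (hY : Measure.map Y μ = expMeasure (1 / my))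
    (hZ : Measure.map Z μ = expMeasure (1 / mz))
    (hW : Measure.map W μ = expMeasure (1 / mw))
    (hU : Measure.map U μ = expMeasure (1 / mu))
    (hindep : iIndepFun ![X, Y, Z, W, U] μ) :
    ∫ ω, (P1 * Z ω + P2 * W ω) * U ω / (P1 * X ω + P2 * Y ω) ∂μ
      = mu * (P1 * mz + P2 * mw) * Real.log (P1 * mx / (P2 * my)) / (P1 * mx - P2 * my) :=
  expectation_jamming_ratio_general μ X Y Z W U mx my mz mw mu P1 P2 hmx hmy hmz hmw hmu hP1 hP2 hne
    hXm hYm hZm hWm hUm hX hY hZ hW hU hindep
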